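/- Let p be a prime number, let r and s be positive integers, let m be a non-negative integer, let B and e be positive real constants, and let H be a finite group with a normal subgroup F such that the quotient H/F is abelian and generated by r elements. Suppose that the p-Sylow subgroup F_p of F is normal in F and is isomorphic to (Z/pZ)^m, that |F| ≤ B·|F_p|^e, and that F is generated by F_p together with s additional elements. Then H contains a characteristic abelian subgroup of order coprime to p and of index at most B^{r+s+1}·|H_p|^{e(r+s+1)+r+1}, where H_p is a p-Sylow subgroup of H. -/

import Mathlib

/-!
Take `A` to be the central elements of order prime to `p`: it is characteristic and abelian, and
`Z(H)/A` is a `p`-group, so `[Z(H) : A] ≤ |H_p|`.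

Let `V ≅ (ℤ/pℤ)^m` be the image of `F_p`; it is characteristic in `F`, hence normal in `H`.
Together with `r + s` elements (lifts of generators of `H/F` and the extra generators of `F`),
`V` generates `H`, so `Z(H)` is the intersection of `C_H(V)` with `r + s` centralizers of single
elements. As `H/F` is abelian, every conjugacy class of `H` lies in a coset of `F`, so each of
these centralizers has index at most `|F|`. Conjugation by `x` acts on `V` as a linear map over
`𝔽_p`, whose powers are polynomials of degree `< m` in it (Cayley–Hamilton); so its order is at
most `p^m`. Hence `H/(C_H(V)F)`, an abelian group generated by `r` elements of order `≤ p^m`, has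
order at most `p^{mr}`, and `[H : C_H(V)] ≤ |F| p^{mr}`. Altogether
`[H : A] ≤ |H_p| |F|^{r+s+1} p^{mr}`, and we conclude with `|F| ≤ B |F_p|^e`,
`|F_p| = p^m ≤ |H_p|`.
-/

open Polynomial in
theorem Module.End.orderOf_le_card_pow_finrank {R M : Type*} [CommRing R] [Nontrivial R]
    [Finite R] [AddCommGroup M] [Module R M] [Module.Free R M] [Module.Finite R M]
    (f : Module.End R M) : orderOf f ≤ Nat.card R ^ Module.finrank R M := by
  have hdeg : ∀ k, X ^ k %ₘ f.charpoly ∈ degreeLT R (Module.finrank R M) := fun k => by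
    rw [mem_degreeLT, ← f.charpoly_natDegree, ← degree_eq_natDegree f.charpoly_monic.ne_zero]
    exact degree_modByMonic_lt _ f.charpoly_monic
  let c : Fin (orderOf f) → degreeLT R (Module.finrank R M) := fun k => ⟨_, hdeg k⟩
  have hc : c.Injective := fun i j h => Fin.ext <| pow_injOn_Iio_orderOf i.2 j.2 <| by
    simp only [f.pow_eq_aeval_mod_charpoly]
    exact congrArg (aeval f ∘ Subtype.val) h
  calc orderOf f = Nat.card (Fin (orderOf f)) := (Nat.card_fin _).symm
    _ ≤ Nat.card (Fin (Module.finrank R M) → R) :=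
      Nat.card_le_card_of_injective _ ((degreeLTEquiv R _).injective.comp hc)
    _ = Nat.card R ^ Module.finrank R M := by rw [Nat.card_fun, Nat.card_fin]

namespace MulAut

section ZModEnd

variable (p : ℕ) (W : Type*) [AddCommGroup W] [Module (ZMod p) W]

def toZModEnd : MulAut (Multiplicative W) →* Module.End (ZMod p) W where
  toFun σ := (AddEquiv.toMultiplicative.symm σ : W ≃+ W).toAddMonoidHom.toZModLinearMap p
  map_one' := rfl
  map_mul' _ _ := rfl

theorem toZModEnd_injective : Function.Injective (toZModEnd p W) :=
  fun _ _ h => MulEquiv.ext fun w =>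
    congrArg Multiplicative.ofAdd (LinearMap.congr_fun h w.toAdd)

end ZModEnd

theorem orderOf_le_pow_finrank {p : ℕ} [Fact p.Prime] {V W : Type*} [Group V]
    [AddCommGroup W] [Module (ZMod p) W] [Module.Finite (ZMod p) W]
    (e : V ≃* Multiplicative W) (σ : MulAut V) :
    orderOf σ ≤ p ^ Module.finrank (ZMod p) W := by
  rw [← orderOf_injective (MulAut.congr e).toMonoidHom (MulAut.congr e).injective,
    ← orderOf_injective _ (toZModEnd_injective p W)]
  simpa using (toZModEnd p W (MulAut.congr e σ)).orderOf_le_card_pow_finrank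

theorem ker_conjNormal {G : Type*} [Group G] (V : Subgroup G) [V.Normal] :
    (MulAut.conjNormal : G →* MulAut V).ker = Subgroup.centralizer (V : Set G) := by
  ext g
  simp only [MonoidHom.mem_ker, MulEquiv.ext_iff, Subgroup.mem_centralizer_iff, Subtype.ext_iff,
    MulAut.conjNormal_apply, MulAut.one_apply, Subtype.forall, SetLike.mem_coe]
  exact forall₂_congr fun a _ => by rw [mul_inv_eq_iff_eq_mul, eq_comm]

end MulAut

section

variable {G : Type*} [Group G]

open scoped IsMulCommutative in
theorem card_le_prod_orderOf_of_closure_eq_top [IsMulCommutative G] [Finite G] {S : Finset G}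
    (hS : Subgroup.closure (S : Set G) = ⊤) : Nat.card G ≤ ∏ s ∈ S, orderOf s := by
  have hsurj : Function.Surjective
      fun k : (s : S) → Fin (orderOf (s : G)) => ∏ s : S, (s : G) ^ (k s : ℕ) := by
    intro g
    have hg : g ∈ Submonoid.closure (S : Set G) := by
      rw [← Subgroup.closure_toSubmonoid_of_finite, hS]; trivial
    obtain ⟨f, -, rfl⟩ := Submonoid.mem_closure_finset.mp hg
    refine ⟨fun s => ⟨f s % orderOf (s : G), Nat.mod_lt _ (orderOf_pos _)⟩, ?_⟩
    rw [← Finset.prod_coe_sort S]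
    simp only [pow_mod_orderOf]
  calc Nat.card G ≤ Nat.card ((s : S) → Fin (orderOf (s : G))) :=
        Nat.card_le_card_of_surjective _ hsurj
    _ = ∏ s ∈ S, orderOf s := by
      rw [Nat.card_pi]; simp only [Nat.card_fin]; exact Finset.prod_coe_sort S orderOf

theorem card_le_pow_rank_of_orderOf_le [IsMulCommutative G] [Finite G] {n : ℕ}
    (hn : ∀ g : G, orderOf g ≤ n) : Nat.card G ≤ n ^ Group.rank G := by
  obtain ⟨S, hcard, hS⟩ := Group.rank_spec G
  rw [← hcard]
  exact (card_le_prod_orderOf_of_closure_eq_top hS).trans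
    (Finset.prod_le_pow_card _ _ _ fun g _ => hn g)

theorem card_commutatorSet_le_of_commutator_le [Finite G] {N : Subgroup G}
    (h : commutator G ≤ N) : Nat.card (commutatorSet G) ≤ Nat.card N :=
  Nat.card_mono (Set.toFinite _) fun _ hx =>
    h (commutator_eq_closure G ▸ Subgroup.subset_closure hx)

theorem orderOf_mk_centralizer_le {V : Subgroup G} [V.Normal] {n : ℕ}
    (hn : ∀ g : G, orderOf (MulAut.conjNormal g : MulAut V) ≤ n)
    (g : G ⧸ Subgroup.centralizer (V : Set G)) : orderOf g ≤ n := by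
  obtain ⟨g, rfl⟩ := QuotientGroup.mk_surjective g
  have : orderOf (g : G ⧸ Subgroup.centralizer (V : Set G)) =
      orderOf (MulAut.conjNormal g : MulAut V) := orderOf_eq_orderOf_iff.mpr fun k => by
    rw [← QuotientGroup.mk_pow, QuotientGroup.eq_one_iff, ← MulAut.ker_conjNormal,
      MonoidHom.mem_ker, map_pow]
  exact this ▸ hn g

namespace Subgroup

theorem centralizer_union (s t : Set G) :
    centralizer (s ∪ t) = centralizer s ⊓ centralizer t :=
  SetLike.coe_injective Set.centralizer_union

theorem index_centralizer_le_pow [Finite G] (s : Set G) :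
    (centralizer s).index ≤ Nat.card (commutatorSet G) ^ Nat.card s := by
  rw [centralizer_eq_iInf, ← iInf_subtype'', index_eq_card, ← Nat.card_fun]
  exact Finite.card_le_of_embedding <| (quotientiInfEmbedding _).trans <|
    .piCongrRight fun g => quotientCentralizerEmbedding (g : G)

theorem index_center_le [Finite G] (V : Subgroup G) {T : Set G}
    (hT : closure ((V : Set G) ∪ T) = ⊤) :
    (center G).index ≤
      (centralizer (V : Set G)).index * Nat.card (commutatorSet G) ^ Nat.card T := by
  rw [← centralizer_univ, ← coe_top, ← hT, centralizer_closure, centralizer_union]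
  exact index_inf_le.trans (Nat.mul_le_mul_left _ (index_centralizer_le_pow T))

theorem closure_union_eq_top {F : Subgroup G} [F.Normal] {U T : Set G}
    (hU : F ≤ closure U) (hT : closure (((↑) : G → G ⧸ F) '' T) = ⊤) :
    closure (U ∪ T) = ⊤ := by
  have hF : (QuotientGroup.mk' F).ker ≤ closure (U ∪ T) := by
    rw [QuotientGroup.ker_mk']; exact hU.trans (closure_mono Set.subset_union_left)
  rw [← comap_map_eq_self hF, eq_top_iff, ← comap_top (QuotientGroup.mk' F), ← hT]
  refine comap_mono (closure_le _ |>.mpr ?_)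
  rintro _ ⟨t, ht, rfl⟩
  exact mem_map_of_mem _ (subset_closure (Or.inr ht))

theorem index_le_card_mul_pow_rank [Finite G] {F C : Subgroup G} [F.Normal] [C.Normal]
    (hF : _root_.commutator G ≤ F) {n : ℕ} (hn : ∀ g : G ⧸ C, orderOf g ≤ n) :
    C.index ≤ Nat.card F * n ^ Group.rank (G ⧸ F) := by
  have : IsMulCommutative (G ⧸ (C ⊔ F)) :=
    Normal.quotient_commutative_iff_commutator_le.mpr (hF.trans le_sup_right)
  let π : G ⧸ C →* G ⧸ (C ⊔ F) := QuotientGroup.map _ _ (.id G) le_sup_left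
  let ρ : G ⧸ F →* G ⧸ (C ⊔ F) := QuotientGroup.map _ _ (.id G) le_sup_right
  have hπ : Function.Surjective π :=
    QuotientGroup.map_surjective_of_surjective _ _ _ QuotientGroup.mk_surjective _
  have hρ : Function.Surjective ρ :=
    QuotientGroup.map_surjective_of_surjective _ _ _ QuotientGroup.mk_surjective _
  have horder : ∀ g : G ⧸ (C ⊔ F), orderOf g ≤ n := by
    intro g
    obtain ⟨g, rfl⟩ := hπ g
    exact (Nat.le_of_dvd (orderOf_pos g) (orderOf_map_dvd π g)).trans (hn g)
  have hn₁ : 1 ≤ n := orderOf_one (G := G ⧸ C) ▸ hn 1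
  rw [← relIndex_mul_index (le_sup_left : C ≤ C ⊔ F), relIndex_sup_left, index_eq_card]
  exact Nat.mul_le_mul (Nat.le_of_dvd Nat.card_pos (relIndex_dvd_card _ _))
    ((card_le_pow_rank_of_orderOf_le horder).trans
      (Nat.pow_le_pow_right hn₁ (Group.rank_le_of_surjective ρ hρ)))

theorem index_centralizer_le_of_mulEquiv [Finite G] {F V : Subgroup G} [F.Normal] [V.Normal]
    (hF : _root_.commutator G ≤ F) {p : ℕ} [Fact p.Prime] {W : Type*} [AddCommGroup W]
    [Module (ZMod p) W] [Module.Finite (ZMod p) W] (e : V ≃* Multiplicative W) :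
    (centralizer (V : Set G)).index ≤
      Nat.card F * (p ^ Module.finrank (ZMod p) W) ^ Group.rank (G ⧸ F) :=
  index_le_card_mul_pow_rank hF <| orderOf_mk_centralizer_le fun _ =>
    MulAut.orderOf_le_pow_finrank e _

theorem index_center_le_of_sup_closure_eq_top [Finite G] {F : Subgroup G} [F.Normal]
    (hF : _root_.commutator G ≤ F) {P : Subgroup F} {Y : Finset F}
    (hY : P ⊔ closure (Y : Set F) = ⊤) {S : Finset (G ⧸ F)}
    (hS : closure (S : Set (G ⧸ F)) = ⊤) :
    (center G).index ≤
      (centralizer (P.map F.subtype : Set G)).index * Nat.card F ^ (S.card + Y.card) := by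
  classical
  let T : Finset G := Y.image F.subtype ∪ S.image Quotient.out
  have hT : closure ((P.map F.subtype : Set G) ∪ T) = ⊤ := by
    rw [Finset.coe_union, ← Set.union_assoc]
    refine closure_union_eq_top (F := F) ?_ ?_
    · calc F = (⊤ : Subgroup F).map F.subtype :=
            F.range_subtype.symm.trans F.subtype.range_eq_map
        _ = P.map F.subtype ⊔ closure (F.subtype '' Y) := by
          rw [← hY, map_sup, MonoidHom.map_closure]
        _ ≤ closure ((P.map F.subtype : Set G) ∪ ↑(Y.image F.subtype)) := by
          rw [closure_union, closure_eq, Finset.coe_image]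
    · rw [Finset.coe_image, Set.image_image]
      convert hS
      ext q
      simp
  refine (index_center_le _ hT).trans ?_
  gcongr
  · exact Nat.card_pos
  · exact card_commutatorSet_le_of_commutator_le hF
  · rw [Nat.card_coe_set_eq, Set.ncard_coe_finset, add_comm]
    exact (Finset.card_union_le _ _).trans (add_le_add Finset.card_image_le Finset.card_image_le)

def coprimeCenter (p : ℕ) (G : Type*) [Group G] : Subgroup G where
  carrier := {z | z ∈ center G ∧ (orderOf z).Coprime p}
  one_mem' := ⟨one_mem _, by simp⟩
  mul_mem' := fun {a b} ⟨ha, ha'⟩ ⟨hb, hb'⟩ => ⟨mul_mem ha hb,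
    (Nat.Coprime.mul_left ha' hb').coprime_dvd_left
      (Commute.orderOf_mul_dvd_mul_orderOf (mem_center_iff.mp hb a))⟩
  inv_mem' := fun ⟨ha, ha'⟩ => ⟨inv_mem ha, by rwa [orderOf_inv]⟩

variable {p : ℕ}

theorem coprimeCenter_le_center : coprimeCenter p G ≤ center G := fun _ h => h.1

instance : (coprimeCenter p G).Characteristic :=
  characteristic_iff_le_comap.mpr fun ϕ _ ⟨hz, hz'⟩ =>
    ⟨characteristic_iff_le_comap.mp centerCharacteristic ϕ hz, by
      rwa [orderOf_injective ϕ.toMonoidHom ϕ.injective]⟩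

instance : IsMulCommutative (coprimeCenter p G) :=
  .of_setLike_mul_comm fun _ _ _ hb => mem_center_iff.mp hb.1 _

theorem coprime_card_coprimeCenter [Fact p.Prime] [Finite G] :
    (Nat.card (coprimeCenter p G)).Coprime p := by
  refine (Nat.Prime.coprime_iff_not_dvd Fact.out).mpr (fun h => ?_) |>.symm
  obtain ⟨z, hz⟩ := exists_prime_orderOf_dvd_card' p h
  have hcop := z.2.2
  rw [orderOf_submonoid, hz] at hcop
  exact (Nat.Prime.coprime_iff_not_dvd Fact.out).mp hcop dvd_rfl

theorem relIndex_coprimeCenter_le [Fact p.Prime] [Finite G] (P : Sylow p G) :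
    (coprimeCenter p G).relIndex (center G) ≤ Nat.card P := by
  have hP : IsPGroup p (center G ⧸ (coprimeCenter p G).subgroupOf (center G)) := by
    intro g
    obtain ⟨z, rfl⟩ := QuotientGroup.mk_surjective g
    refine ⟨(orderOf z).factorization p, ?_⟩
    rw [← QuotientGroup.mk_pow, QuotientGroup.eq_one_iff, mem_subgroupOf]
    refine ⟨(z ^ _).2, ?_⟩
    rw [Subgroup.orderOf_coe, orderOf_pow, Nat.gcd_eq_right (Nat.ordProj_dvd _ p)]
    exact (Nat.coprime_ordCompl Fact.out (orderOf_pos z).ne').symm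
  obtain ⟨k, hk⟩ := hP.exists_card_eq
  rw [relIndex, index_eq_card, hk]
  refine Nat.le_of_dvd Nat.card_pos (P.pow_dvd_card_of_pow_dvd_card ?_)
  rw [← hk, ← index_eq_card, ← relIndex]
  exact (relIndex_dvd_card _ _).trans (card_subgroup_dvd_card _)

theorem index_coprimeCenter_le [Fact p.Prime] [Finite G] (P : Sylow p G) :
    (coprimeCenter p G).index ≤ Nat.card P * (center G).index := by
  rw [← relIndex_mul_index coprimeCenter_le_center]
  exact Nat.mul_le_mul_right _ (relIndex_coprimeCenter_le P)

end Subgroup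

end

theorem Sylow.card_le_card_of_subgroup {G : Type*} [Group G] [Finite G] {p : ℕ} [Fact p.Prime]
    {F : Subgroup G} (Q : Sylow p F) (P : Sylow p G) : Nat.card Q ≤ Nat.card P := by
  rw [Q.card_eq_multiplicity]
  exact Nat.le_of_dvd Nat.card_pos <| P.pow_dvd_card_of_pow_dvd_card <|
    (Nat.ordProj_dvd _ p).trans (Subgroup.card_subgroup_dvd_card F)

theorem mul_mul_pow_le_rpow {x y f B e : ℝ} {r s : ℕ} (hx : 0 < x) (hy₀ : 0 ≤ y)
    (hy : y ≤ x) (hf₀ : 0 ≤ f) (hf : f ≤ B * x ^ e) :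
    x * (f * y ^ r) * f ^ (r + s) ≤ B ^ (r + s + 1) * x ^ (e * (r + s + 1) + r + 1) :=
  calc x * (f * y ^ r) * f ^ (r + s) = x * y ^ r * f ^ (r + s + 1) := by ring
    _ ≤ x * x ^ r * (B * x ^ e) ^ (r + s + 1) := by gcongr
    _ = B ^ (r + s + 1) * (x ^ (e * ↑(r + s + 1)) * x ^ ((r + 1 : ℕ) : ℝ)) := by
      rw [Real.rpow_mul_natCast hx.le, Real.rpow_natCast]; ring
    _ = B ^ (r + s + 1) * x ^ (e * (r + s + 1) + r + 1) := by
      rw [← Real.rpow_add hx]; push_cast; ring_nf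

theorem characteristic_abelian_of_abelian_quotient_elementary_sylow_general
    (p : ℕ) (hp : p.Prime) (r s : ℕ) (m : ℕ)
    (B e : ℝ) (hB : 0 < B) (he : 0 < e)
    (H : Type*) [Group H] [Finite H]
    (F : Subgroup H) (hF : F.Normal)
    (habelian : ∀ a b : H ⧸ F, a * b = b * a)
    (hgenQ : ∃ S : Finset (H ⧸ F), S.card ≤ r ∧
      Subgroup.closure (S : Set (H ⧸ F)) = ⊤)
    (Fp : Sylow p ↥F)
    (hFpnormal : (Fp : Subgroup ↥F).Normal)
    (hFpiso : Nonempty (↥(Fp : Subgroup ↥F) ≃* (Fin m → Multiplicative (ZMod p))))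
    (hcard : (Nat.card F : ℝ) ≤ B * (Nat.card Fp : ℝ) ^ e)
    (hgenF : ∃ S : Finset ↥F, S.card ≤ s ∧
      (Fp : Subgroup ↥F) ⊔ Subgroup.closure (S : Set ↥F) = ⊤)
    (Hp : Sylow p H) :
    ∃ A : Subgroup H, A.Characteristic ∧ IsMulCommutative A ∧
      Nat.Coprime (Nat.card A) p ∧
      (A.index : ℝ) ≤ B ^ (r + s + 1) *
        (Nat.card Hp : ℝ) ^ (e * (r + s + 1) + r + 1) := by
  classical
  have := Fact.mk hp
  obtain ⟨S, hScard, hS⟩ := hgenQ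
  obtain ⟨Y, hYcard, hY⟩ := hgenF
  obtain ⟨iso⟩ := hFpiso
  have hcomm : commutator H ≤ F :=
    hF.quotient_commutative_iff_commutator_le.mp (isMulCommutative_iff.mpr habelian)
  have := Sylow.characteristic_of_normal Fp hFpnormal
  have hFp : Nat.card Fp = p ^ m := by rw [Nat.card_congr iso.toEquiv, Nat.card_pi]; simp
  have hFpHp : Nat.card Fp ≤ Nat.card Hp := Fp.card_le_card_of_subgroup Hp
  have hC := Subgroup.index_centralizer_le_of_mulEquiv (p := p) hcomm
    (((Fp : Subgroup F).equivMapOfInjective _ F.subtype_injective).symm.trans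
      (iso.trans (MulEquiv.piMultiplicative _).symm))
  rw [Module.finrank_fin_fun] at hC
  have hidx : (Subgroup.coprimeCenter p H).index ≤
      Nat.card Hp * (Nat.card F * (p ^ m) ^ r * Nat.card F ^ (r + s)) := by
    refine (Subgroup.index_coprimeCenter_le Hp).trans (Nat.mul_le_mul_left _ <|
      (Subgroup.index_center_le_of_sup_closure_eq_top hcomm hY hS).trans ?_)
    gcongr
    · refine hC.trans ?_
      gcongr
      · exact Nat.one_le_pow _ _ hp.pos
      · exact (Group.rank_le hS).trans hScard
    · exact Nat.card_pos
  refine ⟨Subgroup.coprimeCenter p H, inferInstance, inferInstance,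
    Subgroup.coprime_card_coprimeCenter, ?_⟩
  calc (Subgroup.coprimeCenter p H).index
      ≤ (Nat.card Hp : ℝ) * (Nat.card F * ((p : ℝ) ^ m) ^ r) * Nat.card F ^ (r + s) := by
        exact_mod_cast hidx.trans_eq (by ring)
    _ ≤ _ := mul_mul_pow_le_rpow (by exact_mod_cast Nat.card_pos) (by positivity)
        (by exact_mod_cast hFp ▸ hFpHp) (by positivity) (hcard.trans (by gcongr))

/-- Let `1 → F → H → H̄ → 1` be an exact sequence of finite groups with `H̄` abelian and
generated by `r` elements. Suppose the `p`-Sylow subgroup `F_p` of `F` is normal in `F` and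
isomorphic to `(ℤ/pℤ)^m`, that `|F| ≤ B * |F_p|^e`, and that `F` is generated by `F_p`
together with `s` additional elements. Then `H` contains a characteristic abelian subgroup
of order coprime to `p` and index at most `B^(r+s+1) * |H_p|^(e(r+s+1)+r+1)`. -/
theorem characteristic_abelian_of_abelian_quotient_elementary_sylow
    (p : ℕ) (hp : p.Prime) (r s : ℕ) (hr : 0 < r) (hs : 0 < s) (m : ℕ)
    (B e : ℝ) (hB : 0 < B) (he : 0 < e)
    (H : Type*) [Group H] [Finite H]
    (F : Subgroup H) (hF : F.Normal)
    (habelian : ∀ a b : H ⧸ F, a * b = b * a)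
    (hgenQ : ∃ S : Finset (H ⧸ F), S.card ≤ r ∧
      Subgroup.closure (S : Set (H ⧸ F)) = ⊤)
    (Fp : Sylow p ↥F)
    (hFpnormal : (Fp : Subgroup ↥F).Normal)
    (hFpiso : Nonempty (↥(Fp : Subgroup ↥F) ≃* (Fin m → Multiplicative (ZMod p))))
    (hcard : (Nat.card F : ℝ) ≤ B * (Nat.card Fp : ℝ) ^ e)
    (hgenF : ∃ S : Finset ↥F, S.card ≤ s ∧
      (Fp : Subgroup ↥F) ⊔ Subgroup.closure (S : Set ↥F) = ⊤)
    (Hp : Sylow p H) :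
    ∃ A : Subgroup H, A.Characteristic ∧ IsMulCommutative A ∧
      Nat.Coprime (Nat.card A) p ∧
      (A.index : ℝ) ≤ B ^ (r + s + 1) *
        (Nat.card Hp : ℝ) ^ (e * (r + s + 1) + r + 1) :=
  characteristic_abelian_of_abelian_quotient_elementary_sylow_general p hp r s m B e hB he H F hF
    habelian hgenQ Fp hFpnormal hFpiso hcard hgenF Hp
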